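/- arXiv:2012.05451 — 6 statements merged into one kernel-verified Lean document; each statement's English description precedes it below -/
import Mathlib

section
/- Fix d ≥ 1 and ε ∈ (0,1). Suppose ĥ : [0,1] → [log ε, 0] satisfies |ĥ(x) - max(log x, log ε)| ≤ ε/d for all x ∈ [ε,1] and ĥ(x) = log ε for x ∈ [0,ε], and suppose ĝ : ℝ_{≤0} → [0,1] satisfies |ĝ(y) - e^y| ≤ ε for all y ≤ 0. Define φ̂(x₁,…,x_d) = ĝ(Σ_{i=1}^d ĥ(x_i)). Then for ε sufficiently small, |φ̂(x) - Π_{i=1}^d x_i| ≤ 3ε for all x ∈ [0,1]^d. -/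
/-!
Put `S = ∑ ĥ(xᵢ) ≤ 0`. If every `xᵢ ≥ ε`, then `∏ xᵢ = exp (∑ log xᵢ)` and `exp` is
`1`-Lipschitz on `(-∞, 0]`, so `|exp S - ∏ xᵢ| ≤ ∑ |ĥ(xᵢ) - log xᵢ| ≤ d · ε/d = ε`.
Otherwise some `xⱼ < ε` forces `ĥ(xⱼ) = log ε`, hence `exp S ≤ ε`, while `∏ xᵢ ≤ xⱼ < ε`:
both lie in `[0, ε]`. Replacing `exp` by `ĝ` costs another `ε`, so the error is at most `2ε`.
-/

open Set Real

theorem Real.abs_exp_sub_exp_le_of_nonpos {a b : ℝ} (ha : a ≤ 0) (hb : b ≤ 0) :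
    |exp a - exp b| ≤ |a - b| := by
  wlog hba : b ≤ a generalizing a b
  · rw [abs_sub_comm, abs_sub_comm a]
    exact this hb ha (le_of_not_ge hba)
  rw [abs_of_nonneg (sub_nonneg.2 (exp_le_exp.2 hba)), abs_of_nonneg (sub_nonneg.2 hba)]
  have hfactor : 1 - exp (-(a - b)) ≤ a - b := by linarith [one_sub_le_exp_neg (a - b)]
  have hsplit : exp a - exp b = exp a * (1 - exp (-(a - b))) := by
    rw [mul_sub, mul_one, ← exp_add]; ring_nf
  rw [hsplit]
  calc exp a * (1 - exp (-(a - b))) ≤ 1 * (a - b) := by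
        gcongr
        · linarith [exp_le_one_iff.2 (neg_nonpos.2 (sub_nonneg.2 hba))]
        · exact exp_le_one_iff.2 ha
    _ = a - b := one_mul _

section

variable {ι : Type*} [Fintype ι]

theorem abs_exp_sum_sub_prod_le {x y : ι → ℝ} (hx : ∀ i, x i ∈ Ioc 0 1) (hy : ∑ i, y i ≤ 0) :
    |exp (∑ i, y i) - ∏ i, x i| ≤ ∑ i, |y i - log (x i)| := by
  have hprod : ∏ i, x i = exp (∑ i, log (x i)) := by
    rw [exp_sum]
    exact Finset.prod_congr rfl fun i _ => (exp_log (hx i).1).symm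
  have hlog : ∑ i, log (x i) ≤ 0 := Finset.sum_nonpos fun i _ => log_nonpos (hx i).1.le (hx i).2
  calc |exp (∑ i, y i) - ∏ i, x i| ≤ |∑ i, y i - ∑ i, log (x i)| := by
        rw [hprod]; exact abs_exp_sub_exp_le_of_nonpos hy hlog
    _ = |∑ i, (y i - log (x i))| := by rw [Finset.sum_sub_distrib]
    _ ≤ ∑ i, |y i - log (x i)| := Finset.abs_sum_le_sum_abs _ _

theorem exp_sum_le_of_le_log {y : ι → ℝ} {ε : ℝ} (hε : 0 < ε) (hy : ∀ i, y i ≤ 0) {j : ι}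
    (hj : y j ≤ log ε) : exp (∑ i, y i) ≤ ε := by
  have hsum : ∑ i, y i ≤ y j := by
    simpa using Finset.sum_le_sum_of_subset_of_nonpos' (Finset.subset_univ {j})
      fun i _ _ => hy i
  calc exp (∑ i, y i) ≤ exp (log ε) := exp_le_exp.2 (hsum.trans hj)
    _ = ε := exp_log hε

theorem prod_le_of_le_of_mem_Icc {x : ι → ℝ} {ε : ℝ} (hx : ∀ i, x i ∈ Icc 0 1) {j : ι}
    (hj : x j ≤ ε) : ∏ i, x i ≤ ε := by
  have hprod : ∏ i, x i ≤ x j := by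
    simpa using Finset.prod_le_prod_of_subset_of_le_one (Finset.subset_univ {j})
      (fun i _ => (hx i).1) fun i _ _ => (hx i).2
  exact hprod.trans hj

theorem abs_exp_sum_sub_prod_le_of_approx_log {ε δ : ℝ} {h : ℝ → ℝ} (hε : 0 < ε)
    (hnonpos : ∀ t ∈ Icc (0 : ℝ) 1, h t ≤ 0)
    (happrox : ∀ t ∈ Icc ε 1, |h t - max (log t) (log ε)| ≤ δ)
    (htrunc : ∀ t ∈ Icc (0 : ℝ) ε, h t = log ε) {x : ι → ℝ} (hx : ∀ i, x i ∈ Icc 0 1) :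
    |exp (∑ i, h (x i)) - ∏ i, x i| ≤ max ε (Fintype.card ι * δ) := by
  by_cases hlarge : ∀ i, ε ≤ x i
  · have hlog : ∀ i, |h (x i) - log (x i)| ≤ δ := fun i => by
      simpa [max_eq_left (log_le_log hε (hlarge i))] using happrox (x i) ⟨hlarge i, (hx i).2⟩
    calc |exp (∑ i, h (x i)) - ∏ i, x i| ≤ ∑ i, |h (x i) - log (x i)| :=
          abs_exp_sum_sub_prod_le (fun i => ⟨hε.trans_le (hlarge i), (hx i).2⟩)
            (Finset.sum_nonpos fun i _ => hnonpos _ (hx i))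
      _ ≤ ∑ _i : ι, δ := Finset.sum_le_sum fun i _ => hlog i
      _ = Fintype.card ι * δ := by simp
      _ ≤ max ε (Fintype.card ι * δ) := le_max_right _ _
  · obtain ⟨j, hj⟩ : ∃ j, x j < ε := by simpa using hlarge
    refine (abs_sub_le_of_nonneg_of_le (exp_pos _).le ?_
      (Finset.prod_nonneg fun i _ => (hx i).1) (prod_le_of_le_of_mem_Icc hx hj.le)).trans
      (le_max_left _ _)
    exact exp_sum_le_of_le_log hε (fun i => hnonpos _ (hx i))
      (htrunc (x j) ⟨(hx j).1, hj.le⟩).le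

end

theorem stmt5_general (d : ℕ) :
    ∃ ε₀ : ℝ, 0 < ε₀ ∧
      ∀ (ε : ℝ) (h g : ℝ → ℝ), 0 < ε → ε < ε₀ → ε < 1 →
        (∀ t ∈ Icc (0 : ℝ) 1, h t ∈ Icc (Real.log ε) 0) →
        (∀ t ∈ Icc ε 1, |h t - max (Real.log t) (Real.log ε)| ≤ ε / d) →
        (∀ t ∈ Icc (0 : ℝ) ε, h t = Real.log ε) →
        (∀ y : ℝ, y ≤ 0 → g y ∈ Icc (0 : ℝ) 1 ∧ |g y - Real.exp y| ≤ ε) →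
        ∀ x : Fin d → ℝ, (∀ i, x i ∈ Icc (0 : ℝ) 1) →
          |g (∑ i, h (x i)) - ∏ i, x i| ≤ 3 * ε := by
  refine ⟨1, one_pos, fun ε h g hε _ _ hrange happrox htrunc hg x hx => ?_⟩
  have hnonpos : ∀ t ∈ Icc (0 : ℝ) 1, h t ≤ 0 := fun t ht => (hrange t ht).2
  have hexp := abs_exp_sum_sub_prod_le_of_approx_log hε hnonpos happrox htrunc hx
  have hcard : (Fintype.card (Fin d) : ℝ) * (ε / d) ≤ ε := by
    rcases d.eq_zero_or_pos with rfl | hd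
    · simpa using hε.le
    · rw [Fintype.card_fin, mul_div_cancel₀ _ (by positivity)]
  set S := ∑ i, h (x i)
  have hS : S ≤ 0 := Finset.sum_nonpos fun i _ => hnonpos _ (hx i)
  calc |g S - ∏ i, x i| ≤ |g S - exp S| + |exp S - ∏ i, x i| := abs_sub_le _ _ _
    _ ≤ ε + ε := add_le_add (hg S hS).2 (hexp.trans (max_le le_rfl hcard))
    _ ≤ 3 * ε := by linarith

/-- The two-layer construction `ĝ(∑ ĥ(xᵢ))`, with `ĥ` an `ε/d`-approximation of the
truncated logarithm and `ĝ` an `ε`-approximation of the exponential, approximates the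
product `∏ xᵢ` within `3ε` on `[0,1]^d`, for `ε` sufficiently small. -/
theorem stmt5 (d : ℕ) (hd : 1 ≤ d) :
    ∃ ε₀ : ℝ, 0 < ε₀ ∧
      ∀ (ε : ℝ) (h g : ℝ → ℝ), 0 < ε → ε < ε₀ → ε < 1 →
        (∀ t ∈ Icc (0 : ℝ) 1, h t ∈ Icc (Real.log ε) 0) →
        (∀ t ∈ Icc ε 1, |h t - max (Real.log t) (Real.log ε)| ≤ ε / d) →
        (∀ t ∈ Icc (0 : ℝ) ε, h t = Real.log ε) →
        (∀ y : ℝ, y ≤ 0 → g y ∈ Icc (0 : ℝ) 1 ∧ |g y - Real.exp y| ≤ ε) →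
        ∀ x : Fin d → ℝ, (∀ i, x i ∈ Icc (0 : ℝ) 1) →
          |g (∑ i, h (x i)) - ∏ i, x i| ≤ 3 * ε :=
  stmt5_general d
end

section
/- Let σ : ℝ → ℝ be a function with a horizontal asymptote at -∞ (σ bounded on ℝ_{≤0}) and an affine asymptote b·x + c at +∞ with b > 0 (i.e., x ↦ σ(x) - bx is bounded on ℝ_{≥0}). Then for every ε > 0 there exists M > 0 such that |σ(Mx)/(Mb) - max(x,0)| ≤ ε for all x ∈ ℝ. -/
/-! The activation `σ` stays within a constant `C` of `b` times the ReLU function. Since ReLU is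
positively homogeneous, rescaling by `M` divides this error by `M * b`, which is small for
large `M`. -/

theorem exists_abs_sub_mul_max_zero_le {σ : ℝ → ℝ} {b : ℝ}
    (hneg : ∃ C : ℝ, ∀ x ≤ (0 : ℝ), |σ x| ≤ C)
    (hpos : ∃ C : ℝ, ∀ x ≥ (0 : ℝ), |σ x - b * x| ≤ C) :
    ∃ C : ℝ, 0 ≤ C ∧ ∀ y : ℝ, |σ y - b * max y 0| ≤ C := by
  obtain ⟨C₁, h₁⟩ := hneg
  obtain ⟨C₂, h₂⟩ := hpos
  refine ⟨max C₁ C₂, (abs_nonneg _).trans ((h₁ 0 le_rfl).trans (le_max_left _ _)), fun y => ?_⟩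
  rcases le_total y 0 with hy | hy
  · simpa [max_eq_right hy] using (h₁ y hy).trans (le_max_left _ _)
  · simpa [max_eq_left hy] using (h₂ y hy).trans (le_max_right _ _)

theorem abs_div_mul_sub_max_zero_le {σ : ℝ → ℝ} {b C M : ℝ} (hb : 0 < b) (hM : 0 < M)
    (hσ : ∀ y : ℝ, |σ y - b * max y 0| ≤ C) (x : ℝ) :
    |σ (M * x) / (M * b) - max x 0| ≤ C / (M * b) := by
  have hMb : 0 < M * b := mul_pos hM hb
  have hrescale : σ (M * x) / (M * b) - max x 0 = (σ (M * x) - b * max (M * x) 0) / (M * b) := by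
    rw [show max (M * x) 0 = M * max x 0 by rw [mul_max_of_nonneg _ _ hM.le, mul_zero]]
    field_simp
  rw [hrescale, abs_div, abs_of_pos hMb]
  exact div_le_div_of_nonneg_right (hσ _) hMb.le

/-- A scaled ReLU-like activation approximates the ReLU function uniformly on `ℝ`. -/
theorem stmt8 (σ : ℝ → ℝ) (b : ℝ) (hb : 0 < b)
    (hneg : ∃ C : ℝ, ∀ x ≤ (0 : ℝ), |σ x| ≤ C)
    (hpos : ∃ C : ℝ, ∀ x ≥ (0 : ℝ), |σ x - b * x| ≤ C)
    (ε : ℝ) (hε : 0 < ε) :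
    ∃ M : ℝ, 0 < M ∧ ∀ x : ℝ, |σ (M * x) / (M * b) - max x 0| ≤ ε := by
  obtain ⟨C, hC, hσ⟩ := exists_abs_sub_mul_max_zero_le hneg hpos
  have hM : 0 < (C + 1) / (b * ε) := by positivity
  refine ⟨(C + 1) / (b * ε), hM, fun x => (abs_div_mul_sub_max_zero_le hb hM hσ x).trans ?_⟩
  calc C / ((C + 1) / (b * ε) * b) = C / (C + 1) * ε := by field_simp
    _ ≤ ε := mul_le_of_le_one_left hε.le ((div_le_one (by positivity)).2 (by linarith))
end

section
/- For the truncated logarithm f(x) = log x on [δ,1] with 0 < δ < 1, consider the subdivision x_k = exp(log δ + k·ε̃) for k = 0,…,m with ε̃ = log(1 + √(2ε)) and m = ⌊(1/ε̃)·log(1/δ)⌋, completed with x_{m+1} = 1. Then the continuous piecewise affine interpolant of log on this subdivision approximates log within ε in sup norm on [δ,1]. -/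
/-!
Every piece `[a, b]` of the subdivision satisfies `b ≤ a (1 + √(2ε))`. On it, concavity puts the
chord of `log` below `log`, while comparing `log` with its tangent at the nearer endpoint shows
that it exceeds the chord by at most `(b - a) (1/a - 1/b) / 2 = (b - a)² / (2ab) ≤ ε`. Chords of
adjacent pieces agree at their common node, so taking on each piece its chord defines the
interpolant.
-/

open Set

section Chord

variable {𝕜 : Type*} [Field 𝕜]

/-- Since `slope f a a = 0`, this is the constant `f a` when `a = b`. -/
noncomputable def chord (f : 𝕜 → 𝕜) (a b t : 𝕜) : 𝕜 := f a + slope f a b * (t - a)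

variable (f : 𝕜 → 𝕜) (a b : 𝕜)

@[simp]
theorem chord_left : chord f a b a = f a := by simp [chord]

@[simp]
theorem chord_right : chord f a b b = f b := by
  rw [chord, mul_comm, ← smul_eq_mul, sub_smul_slope, vsub_eq_sub, add_sub_cancel]

theorem chord_eq_slope_mul_add (t : 𝕜) :
    chord f a b t = slope f a b * t + (f a - slope f a b * a) := by
  rw [chord]; ring

end Chord

theorem exists_mem_Icc_succ {α : Type*} [LinearOrder α] (x : ℕ → α) (m : ℕ) {t : α}
    (ht : t ∈ Icc (x 0) (x (m + 1))) : ∃ k ≤ m, t ∈ Icc (x k) (x (k + 1)) := by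
  induction m with
  | zero => exact ⟨0, le_rfl, ht⟩
  | succ m ih =>
    rcases le_total t (x (m + 1)) with h | h
    · obtain ⟨k, hk, htk⟩ := ih ⟨ht.1, h⟩
      exact ⟨k, hk.trans m.le_succ, htk⟩
    · exact ⟨m + 1, le_rfl, h, ht.2⟩

section PiecewiseChord

variable {𝕜 : Type*} [Field 𝕜] [LinearOrder 𝕜] {x : ℕ → 𝕜}

theorem Monotone.chord_eq_chord_of_mem_Icc (hx : Monotone x) (f : 𝕜 → 𝕜) {j k : ℕ} {t : 𝕜}
    (hj : t ∈ Icc (x j) (x (j + 1))) (hk : t ∈ Icc (x k) (x (k + 1))) :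
    chord f (x j) (x (j + 1)) t = chord f (x k) (x (k + 1)) t := by
  wlog hjk : j ≤ k generalizing j k
  · exact (this hk hj (le_of_not_ge hjk)).symm
  rcases hjk.eq_or_lt with rfl | hjk
  · rfl
  have hxk : x (j + 1) ≤ x k := hx hjk
  obtain rfl : t = x (j + 1) := le_antisymm hj.2 (hxk.trans hk.1)
  rw [chord_right, le_antisymm hxk hk.1, chord_left]

theorem Monotone.exists_eq_chord_on_pieces (hx : Monotone x) (f : 𝕜 → 𝕜) (m : ℕ) :
    ∃ g : 𝕜 → 𝕜, (∀ k ≤ m + 1, g (x k) = f (x k)) ∧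
      ∀ k ≤ m, ∀ t ∈ Icc (x k) (x (k + 1)), g t = chord f (x k) (x (k + 1)) t := by
  classical
  let g t := if h : ∃ k ≤ m, t ∈ Icc (x k) (x (k + 1))
    then chord f (x h.choose) (x (h.choose + 1)) t else f t
  have hg : ∀ k ≤ m, ∀ t ∈ Icc (x k) (x (k + 1)), g t = chord f (x k) (x (k + 1)) t := by
    intro k hk t ht
    have h : ∃ k ≤ m, t ∈ Icc (x k) (x (k + 1)) := ⟨k, hk, ht⟩
    simp only [g, dif_pos h]
    exact hx.chord_eq_chord_of_mem_Icc f h.choose_spec.2 ht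
  refine ⟨g, fun k hk => ?_, hg⟩
  rcases hk.lt_or_eq with hk | rfl
  · rw [hg k (Nat.lt_succ_iff.1 hk) _ ⟨le_rfl, hx k.le_succ⟩, chord_left]
  · rw [hg m le_rfl _ ⟨hx m.le_succ, le_rfl⟩, chord_right]

variable [IsStrictOrderedRing 𝕜] {f : 𝕜 → 𝕜}

theorem ConcaveOn.chord_le {s : Set 𝕜} (hf : ConcaveOn 𝕜 s f) {a b t : 𝕜} (ha : a ∈ s)
    (hb : b ∈ s) (ht : t ∈ Icc a b) : chord f a b t ≤ f t := by
  rcases ht.1.eq_or_lt with rfl | hat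
  · simp
  have hts : t ∈ s := hf.1.ordConnected.out ha hb ht
  have hslope : slope f a b ≤ slope f a t :=
    hf.slope_anti ha ⟨hts, hat.ne'⟩ ⟨hb, (hat.trans_le ht.2).ne'⟩ ht.2
  calc chord f a b t ≤ chord f a t t := by unfold chord; gcongr
    _ = f t := chord_right f a t

theorem sub_chord_le_of_le_tangents {a b p q t : 𝕜} (hab : a < b)
    (hpa : ∀ s ∈ Icc a b, f s ≤ f a + p * (s - a))
    (hqb : ∀ s ∈ Icc a b, f s ≤ f b + q * (s - b)) (ht : t ∈ Icc a b) :
    f t - chord f a b t ≤ (b - a) / 2 * (p - q) := by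
  set σ := slope f a b
  have hba : 0 < b - a := sub_pos.2 hab
  have hfb : f b = f a + σ * (b - a) := (chord_right f a b).symm
  have hσp : σ ≤ p := le_of_mul_le_mul_right (by linarith [hpa b ⟨hab.le, le_rfl⟩]) hba
  have hqσ : q ≤ σ := le_of_mul_le_mul_right (by linarith [hqb a ⟨le_rfl, hab.le⟩]) hba
  have hleft := hpa t ht
  have hright := hqb t ht
  rw [chord]
  -- use the tangent through the nearer endpoint
  rcases le_total (t - a) ((b - a) / 2) with hmid | hmid
  · nlinarith [mul_le_mul_of_nonneg_right (sub_le_sub_left hqσ p) (sub_nonneg.2 ht.1),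
      mul_le_mul_of_nonneg_left hmid (sub_nonneg.2 (hqσ.trans hσp))]
  · nlinarith [mul_le_mul_of_nonneg_right (sub_le_sub_right hσp q) (sub_nonneg.2 ht.2),
      mul_le_mul_of_nonneg_left (show b - t ≤ (b - a) / 2 by linarith)
        (sub_nonneg.2 (hqσ.trans hσp))]

end PiecewiseChord

namespace Real

theorem log_le_log_add_inv_mul_sub {a s : ℝ} (ha : 0 < a) (hs : 0 < s) :
    log s ≤ log a + a⁻¹ * (s - a) := by
  have h := log_le_sub_one_of_pos (div_pos hs ha)
  rw [log_div hs.ne' ha.ne'] at h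
  have : s / a - 1 = a⁻¹ * (s - a) := by field_simp
  linarith

theorem log_sub_chord_log_le {a b t : ℝ} (ha : 0 < a) (hab : a < b) (ht : t ∈ Icc a b) :
    log t - chord log a b t ≤ (b - a) ^ 2 / (2 * a * b) := by
  have hb : 0 < b := ha.trans hab
  have key := sub_chord_le_of_le_tangents hab
    (fun s hs => log_le_log_add_inv_mul_sub ha (ha.trans_le hs.1))
    (fun s hs => log_le_log_add_inv_mul_sub hb (ha.trans_le hs.1)) ht
  have : (b - a) / 2 * (a⁻¹ - b⁻¹) = (b - a) ^ 2 / (2 * a * b) := by field_simp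
  linarith

theorem abs_chord_log_sub_log_le {a b t ε : ℝ} (hε : 0 ≤ ε) (ha : 0 < a)
    (hb : b ≤ a * (1 + √(2 * ε))) (ht : t ∈ Icc a b) : |chord log a b t - log t| ≤ ε := by
  rcases (ht.1.trans ht.2).eq_or_lt with rfl | hab
  · obtain rfl : t = a := le_antisymm ht.2 ht.1
    simpa using hε
  have hlow : chord log a b t ≤ log t :=
    strictConcaveOn_log_Ioi.concaveOn.chord_le ha (ha.trans hab) ht
  have hup := log_sub_chord_log_le ha hab ht
  have hsq : (b - a) ^ 2 ≤ 2 * ε * (a * b) := by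
    have h1 : b - a ≤ a * √(2 * ε) := by linarith
    have h2 : (a * √(2 * ε)) ^ 2 = 2 * ε * a ^ 2 := by
      rw [mul_pow, sq_sqrt (by positivity)]; ring
    nlinarith [pow_le_pow_left₀ (sub_pos.2 hab).le h1 2]
  have : (b - a) ^ 2 / (2 * a * b) ≤ ε := by
    rw [div_le_iff₀ (by nlinarith)]; linarith
  rw [abs_le]; constructor <;> linarith

end Real

section ExpGrid

open Real

noncomputable def expGrid (c r : ℝ) (m k : ℕ) : ℝ := if k ≤ m then exp (c + k * r) else 1

variable {c r : ℝ} {m : ℕ}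

theorem expGrid_pos (k : ℕ) : 0 < expGrid c r m k := by
  unfold expGrid; split_ifs <;> positivity

theorem expGrid_monotone (hr : 0 ≤ r) (hm : c + m * r ≤ 0) : Monotone (expGrid c r m) := by
  refine monotone_nat_of_le_succ fun k => ?_
  unfold expGrid
  split_ifs with h1 h2 h2
  · gcongr; linarith
  · exact exp_le_one_iff.2 (by nlinarith [(Nat.cast_le (α := ℝ)).2 h1])
  · omega
  · rfl

theorem expGrid_succ_le (hm : 0 < c + (m + 1) * r) {k : ℕ} (hk : k ≤ m) :
    expGrid c r m (k + 1) ≤ expGrid c r m k * exp r := by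
  unfold expGrid
  rw [if_pos hk, ← exp_add]
  split_ifs with h
  · apply le_of_eq; congr 1; push_cast; ring
  · obtain rfl : k = m := by omega
    exact one_le_exp (by linarith)

end ExpGrid

/-- The piecewise affine interpolant of `log` on the geometric subdivision
`x_k = exp(log δ + k·ε̃)`, `ε̃ = log(1+√(2ε))`, `m = ⌊(1/ε̃)·log(1/δ)⌋`, completed with
`x_{m+1} = 1`, approximates `log` within `ε` in sup norm on `[δ,1]`. -/
theorem stmt9 (δ ε : ℝ) (hδ0 : 0 < δ) (hδ1 : δ < 1) (hε : 0 < ε) :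
    let et : ℝ := Real.log (1 + Real.sqrt (2 * ε))
    let m : ℕ := ⌊(1 / et) * Real.log (1 / δ)⌋₊
    let x : ℕ → ℝ := fun k => if k ≤ m then Real.exp (Real.log δ + k * et) else 1
    ∃ g : ℝ → ℝ,
      (∀ k ≤ m + 1, g (x k) = Real.log (x k)) ∧
      (∀ k ≤ m, ∃ A B : ℝ, ∀ t ∈ Icc (x k) (x (k + 1)), g t = A * t + B) ∧
      ∀ t ∈ Icc δ 1, |g t - Real.log t| ≤ ε := by
  intro et m x
  change ∃ g : ℝ → ℝ, (∀ k ≤ m + 1, g (expGrid (Real.log δ) et m k) = _) ∧ _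
  have het : 0 < et := Real.log_pos (by linarith [Real.sqrt_pos.2 (by linarith : 0 < 2 * ε)])
  have hL : 0 ≤ Real.log (1 / δ) := Real.log_nonneg (by rw [le_div_iff₀ hδ0]; linarith)
  have hlogδ : Real.log δ = -Real.log (1 / δ) := by rw [one_div, Real.log_inv, neg_neg]
  have hm_le : Real.log δ + m * et ≤ 0 := by
    have h : (m : ℝ) ≤ 1 / et * Real.log (1 / δ) := Nat.floor_le (by positivity)
    rw [one_div_mul_eq_div, le_div_iff₀ het] at h
    linarith
  have hm_lt : 0 < Real.log δ + (m + 1) * et := by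
    have h : 1 / et * Real.log (1 / δ) < m + 1 := Nat.lt_floor_add_one _
    rw [one_div_mul_eq_div, div_lt_iff₀ het] at h
    linarith
  have hx := expGrid_monotone het.le hm_le
  have hratio : Real.exp et = 1 + √(2 * ε) := Real.exp_log (by positivity)
  obtain ⟨g, hnode, hpiece⟩ := hx.exists_eq_chord_on_pieces Real.log m
  refine ⟨g, hnode, fun k hk => ⟨_, _, fun t ht => (hpiece k hk t ht).trans
    (chord_eq_slope_mul_add _ _ _ t)⟩, fun t ht => ?_⟩
  have ht' : t ∈ Icc (expGrid (Real.log δ) et m 0) (expGrid (Real.log δ) et m (m + 1)) := by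
    simpa [expGrid, Real.exp_log hδ0] using ht
  obtain ⟨k, hk, htk⟩ := exists_mem_Icc_succ _ m ht'
  rw [hpiece k hk t htk]
  exact Real.abs_chord_log_sub_log_le hε.le (expGrid_pos k)
    (hratio ▸ expGrid_succ_le hm_lt hk) htk
end

section
/- Let f : [a,b] → ℝ be C² with f'' continuous, and let μ > 0, ε > 0 sufficiently small. Then there exists a continuous piecewise affine function g with at most (1+μ)·(∫_a^b √|f''(t)| dt)/√(2ε) + K pieces (for some partition-dependent constant K absorbed for small ε) satisfying ‖f - g‖_∞ ≤ ε; in particular the number of pieces is at most (1+μ)·(∫_a^b √|f''|)/√(2ε) for ε small enough. -/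
/-!
On an interval where `√|f''| ≤ K`, the chord interpolant on a subinterval of length
`s ≤ √(2ε) / K` is within `K² s² / 2 ≤ ε` of `f`: since `f - chord ∓ K²/2 (t - u)(v - t)` is
convex (resp. concave) and vanishes at the endpoints, the error is at most `K²/2 (t - u)(v - t)`.
Cut `[a, b]` into `N` equal cells of length `ℓ`, fine enough that upper bounds `M j` of `√|f''|` on
the cells have `ℓ ∑ M j ≤ (1 + μ/2) ∫ √|f''|` (uniform continuity), and use `⌈ℓ M j / √(2ε)⌉`
equal pieces on cell `j`. Rounding up costs at most `N ≤ (μ/2) ∫ √|f''| / √(2ε)` pieces once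
`ε` is small, and interpolants exact at the nodes glue to a continuous function.
-/

open Set

theorem sub_chord_le_of_neg_le_deriv2 {f f' f'' : ℝ → ℝ} {u v M t : ℝ}
    (hf' : ∀ x ∈ Icc u v, HasDerivAt f (f' x) x) (hf'' : ∀ x ∈ Ioo u v, HasDerivAt f' (f'' x) x)
    (hM : ∀ x ∈ Ioo u v, -M ≤ f'' x) (ht : t ∈ Icc u v) :
    f t - (f u + slope f u v * (t - u)) ≤ M / 2 * ((t - u) * (v - t)) := by
  have huv : u ≤ v := ht.1.trans ht.2
  have hψ' : ∀ x ∈ Icc u v, HasDerivAt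
      (fun x ↦ f x - (f u + slope f u v * (x - u)) - M / 2 * ((x - u) * (v - x)))
      (f' x - slope f u v - M / 2 * (u + v - 2 * x)) x := by
    intro x hx
    exact ((hf' x hx).sub (((hasDerivAt_id' x).sub_const u).const_mul (slope f u v)
      |>.const_add (f u))).sub ((((hasDerivAt_id' x).sub_const u).mul
      ((hasDerivAt_id' x).const_sub v)).const_mul (M / 2)) |>.congr_deriv (by ring)
  have hψ'' : ∀ x ∈ Ioo u v, HasDerivAt (fun x ↦ f' x - slope f u v - M / 2 * (u + v - 2 * x))
      (f'' x + M) x := by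
    intro x hx
    exact ((hf'' x hx).sub_const (slope f u v)).sub
      (((hasDerivAt_id' x).const_mul 2).const_sub (u + v) |>.const_mul (M / 2))
      |>.congr_deriv (by ring)
  -- `ψ := f - chord - M/2 (t - u)(v - t)` has `ψ'' = f'' + M ≥ 0` and vanishes at `u` and `v`
  have hconvex := convexOn_of_hasDerivWithinAt2_nonneg (convex_Icc u v)
    (HasDerivAt.continuousOn hψ') (fun x hx ↦ (hψ' x (interior_subset hx)).hasDerivWithinAt)
    (fun x hx ↦ (hψ'' x (by rwa [interior_Icc] at hx)).hasDerivWithinAt)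
    (fun x hx ↦ by rw [interior_Icc] at hx; linarith [hM x hx])
  have hend : f u + slope f u v * (v - u) = f v := by
    rw [mul_comm, ← smul_eq_mul, sub_smul_slope, vsub_eq_sub]; ring
  have := hconvex.le_on_segment (left_mem_Icc.2 huv) (right_mem_Icc.2 huv)
    (by rwa [segment_eq_Icc huv])
  simp only [sub_self, mul_zero, zero_mul, add_zero, hend, max_self] at this
  linarith

theorem abs_sub_chord_le {f f' f'' : ℝ → ℝ} {u v M t : ℝ}
    (hf' : ∀ x ∈ Icc u v, HasDerivAt f (f' x) x) (hf'' : ∀ x ∈ Ioo u v, HasDerivAt f' (f'' x) x)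
    (hM : ∀ x ∈ Ioo u v, |f'' x| ≤ M) (ht : t ∈ Icc u v) :
    |f t - (f u + slope f u v * (t - u))| ≤ M / 2 * ((t - u) * (v - t)) := by
  have hle := sub_chord_le_of_neg_le_deriv2 hf' hf'' (fun x hx ↦ neg_le_of_abs_le (hM x hx)) ht
  have hge := sub_chord_le_of_neg_le_deriv2 (fun x hx ↦ (hf' x hx).neg) (fun x hx ↦ (hf'' x hx).neg)
    (fun x hx ↦ neg_le_neg (le_of_abs_le (hM x hx))) ht
  simp only [slope_neg_fun, Pi.neg_apply] at hge
  exact abs_le.2 ⟨by linarith, hle⟩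

/-- `g` interpolates `f` at `u` and `v`, so approximations on adjacent intervals glue to a
continuous function. -/
def PiecewiseAffineApprox (f : ℝ → ℝ) (ε u v : ℝ) (m : ℕ) : Prop :=
  ∃ (x : ℕ → ℝ) (g : ℝ → ℝ), Monotone x ∧ x 0 = u ∧ x m = v ∧ ContinuousOn g (Icc u v) ∧
    (∀ k < m, ∃ A B : ℝ, ∀ t ∈ Icc (x k) (x (k + 1)), g t = A * t + B) ∧
    (∀ t ∈ Icc u v, |f t - g t| ≤ ε) ∧ g u = f u ∧ g v = f v

namespace PiecewiseAffineApprox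

variable {f : ℝ → ℝ} {ε u v w : ℝ} {m m₁ m₂ : ℕ}

theorem le (h : PiecewiseAffineApprox f ε u v m) : u ≤ v := by
  obtain ⟨x, -, hx, hx0, hxm, -⟩ := h
  exact hx0 ▸ hxm ▸ hx (Nat.zero_le m)

theorem self (hε : 0 ≤ ε) : PiecewiseAffineApprox f ε u u 0 :=
  ⟨fun _ ↦ u, fun _ ↦ f u, monotone_const, rfl, rfl, continuousOn_const, by simp,
    fun t ht ↦ by rw [Icc_self, mem_singleton_iff] at ht; simp [ht, hε], rfl, rfl⟩

theorem of_abs_sub_chord_le (huv : u ≤ v)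
    (h : ∀ t ∈ Icc u v, |f t - (f u + slope f u v * (t - u))| ≤ ε) :
    PiecewiseAffineApprox f ε u v 1 := by
  have hend : f u + slope f u v * (v - u) = f v := by
    rw [mul_comm, ← smul_eq_mul, sub_smul_slope, vsub_eq_sub]; ring
  refine ⟨fun k ↦ if k = 0 then u else v, fun t ↦ f u + slope f u v * (t - u), ?_, rfl, rfl,
    by fun_prop, fun _ _ ↦ ⟨slope f u v, f u - slope f u v * u, fun t _ ↦ by ring⟩, h,
    by simp, hend⟩
  intro i j hij
  dsimp only
  split_ifs <;> first | rfl | exact huv | omega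

theorem append (h₁ : PiecewiseAffineApprox f ε u v m₁) (h₂ : PiecewiseAffineApprox f ε v w m₂) :
    PiecewiseAffineApprox f ε u w (m₁ + m₂) := by
  have huv := h₁.le
  have hvw := h₂.le
  obtain ⟨x₁, g₁, hx₁, hx₁0, hx₁m, hg₁, haff₁, herr₁, hg₁u, hg₁v⟩ := h₁
  obtain ⟨x₂, g₂, hx₂, hx₂0, hx₂m, hg₂, haff₂, herr₂, hg₂v, hg₂w⟩ := h₂
  set x : ℕ → ℝ := fun k ↦ if k ≤ m₁ then x₁ k else x₂ (k - m₁)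
  set g : ℝ → ℝ := fun t ↦ if t ≤ v then g₁ t else g₂ t
  have hx_left : ∀ k ≤ m₁, x k = x₁ k := fun k hk ↦ if_pos hk
  have hx_right : ∀ k ≥ m₁, x k = x₂ (k - m₁) := by
    intro k hk
    by_cases hk' : k ≤ m₁
    · obtain rfl : k = m₁ := le_antisymm hk' hk
      rw [hx_left k le_rfl, hx₁m, Nat.sub_self, hx₂0]
    · exact if_neg hk'
  have hg_left : ∀ t ≤ v, g t = g₁ t := fun t ht ↦ if_pos ht
  have hg_right : ∀ t ≥ v, g t = g₂ t := by
    intro t ht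
    by_cases ht' : t ≤ v
    · obtain rfl : t = v := le_antisymm ht' ht
      rw [hg_left t le_rfl, hg₁v, hg₂v]
    · exact if_neg ht'
  have hx : Monotone x := by
    intro i j hij
    rcases le_total j m₁ with hj | hj
    · rw [hx_left i (hij.trans hj), hx_left j hj]; exact hx₁ hij
    rcases le_total m₁ i with hi | hi
    · rw [hx_right i hi, hx_right j hj]; exact hx₂ (by omega)
    calc x i = x₁ i := hx_left i hi
      _ ≤ x₁ m₁ := hx₁ hi
      _ = x₂ 0 := by rw [hx₁m, hx₂0]
      _ ≤ x j := hx_right j hj ▸ hx₂ (Nat.zero_le _)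
  refine ⟨x, g, hx, by rw [hx_left 0 (Nat.zero_le _), hx₁0], ?_, ?_, ?_, ?_, ?_, ?_⟩
  · rw [hx_right _ (Nat.le_add_right _ _), Nat.add_sub_cancel_left, hx₂m]
  · rw [← Icc_union_Icc_eq_Icc huv hvw]
    exact (hg₁.congr fun t ht ↦ hg_left t ht.2).union_of_isClosed
      (hg₂.congr fun t ht ↦ hg_right t ht.1) isClosed_Icc isClosed_Icc
  · intro k hk
    rcases lt_or_ge k m₁ with hk₁ | hk₁
    · obtain ⟨A, B, hAB⟩ := haff₁ k hk₁
      refine ⟨A, B, fun t ht ↦ ?_⟩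
      rw [hx_left k hk₁.le, hx_left (k + 1) hk₁] at ht
      rw [hg_left t (ht.2.trans (hx₁m ▸ hx₁ hk₁)), hAB t ht]
    · obtain ⟨A, B, hAB⟩ := haff₂ (k - m₁) (by omega)
      refine ⟨A, B, fun t ht ↦ ?_⟩
      rw [hx_right k hk₁, hx_right (k + 1) (by omega), Nat.sub_add_comm hk₁] at ht
      rw [hg_right t (hx₂0 ▸ (hx₂ (Nat.zero_le _)).trans ht.1), hAB t ht]
  · intro t ht
    rcases le_total t v with htv | htv
    · rw [hg_left t htv]; exact herr₁ t ⟨ht.1, htv⟩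
    · rw [hg_right t htv]; exact herr₂ t ⟨htv, ht.2⟩
  · rw [hg_left u huv, hg₁u]
  · rw [hg_right w hvw, hg₂w]

theorem sum (hε : 0 ≤ ε) {p : ℕ → ℝ} {n : ℕ → ℕ} (N : ℕ)
    (h : ∀ j < N, PiecewiseAffineApprox f ε (p j) (p (j + 1)) (n j)) :
    PiecewiseAffineApprox f ε (p 0) (p N) (∑ j ∈ Finset.range N, n j) := by
  induction N with
  | zero => exact self hε
  | succ N ih =>
    rw [Finset.sum_range_succ]
    exact (ih fun j hj ↦ h j (by omega)).append (h N N.lt_succ_self)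

theorem of_abs_deriv2_le {f' f'' : ℝ → ℝ} {M : ℝ} (huv : u ≤ v)
    (hf' : ∀ x ∈ Icc u v, HasDerivAt f (f' x) x) (hf'' : ∀ x ∈ Icc u v, HasDerivAt f' (f'' x) x)
    (hM : ∀ x ∈ Icc u v, |f'' x| ≤ M) (hε : M * (v - u) ^ 2 ≤ 2 * ε) :
    PiecewiseAffineApprox f ε u v 1 := by
  have hM0 : 0 ≤ M := (abs_nonneg _).trans (hM u (left_mem_Icc.2 huv))
  refine of_abs_sub_chord_le huv fun t ht ↦ ?_
  have hchord := abs_sub_chord_le hf' (fun x hx ↦ hf'' x (Ioo_subset_Icc_self hx))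
    (fun x hx ↦ hM x (Ioo_subset_Icc_self hx)) ht
  have hprod : (t - u) * (v - t) ≤ (v - u) ^ 2 := by nlinarith [ht.1, ht.2]
  nlinarith [mul_le_mul_of_nonneg_left hprod hM0]

theorem of_uniform {f' f'' : ℝ → ℝ} {M h : ℝ} (n : ℕ) (hh : 0 ≤ h)
    (hf' : ∀ x ∈ Icc u (u + n * h), HasDerivAt f (f' x) x)
    (hf'' : ∀ x ∈ Icc u (u + n * h), HasDerivAt f' (f'' x) x)
    (hM : ∀ x ∈ Icc u (u + n * h), |f'' x| ≤ M) (hε : M * h ^ 2 ≤ 2 * ε) :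
    PiecewiseAffineApprox f ε u (u + n * h) n := by
  have hM0 : 0 ≤ M :=
    (abs_nonneg _).trans (hM u (left_mem_Icc.2 (le_add_of_nonneg_right (by positivity))))
  have hε0 : 0 ≤ ε := by nlinarith [mul_nonneg hM0 (sq_nonneg h)]
  have key := sum (p := fun j ↦ u + j * h) (n := fun _ ↦ 1) hε0 n fun j hj ↦ by
    have hsub : Icc (u + j * h) (u + (j + 1 : ℕ) * h) ⊆ Icc u (u + n * h) := by
      apply Icc_subset_Icc
      · nlinarith [(j.cast_nonneg : (0 : ℝ) ≤ j)]
      · have : ((j + 1 : ℕ) : ℝ) ≤ n := by exact_mod_cast hj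
        nlinarith
    refine of_abs_deriv2_le (by push_cast; linarith) (fun x hx ↦ hf' x (hsub hx))
      (fun x hx ↦ hf'' x (hsub hx)) (fun x hx ↦ hM x (hsub hx)) ?_
    push_cast
    ring_nf at hε ⊢
    exact hε
  simpa using key

theorem of_sqrt_abs_deriv2_le {f' f'' : ℝ → ℝ} {ℓ K : ℝ} (hℓ : 0 < ℓ) (hK : 0 < K) (hε : 0 < ε)
    (hf' : ∀ x ∈ Icc u (u + ℓ), HasDerivAt f (f' x) x)
    (hf'' : ∀ x ∈ Icc u (u + ℓ), HasDerivAt f' (f'' x) x)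
    (hbound : ∀ x ∈ Icc u (u + ℓ), √|f'' x| ≤ K) :
    PiecewiseAffineApprox f ε u (u + ℓ) ⌈ℓ * K / √(2 * ε)⌉₊ := by
  set c := √(2 * ε)
  set n := ⌈ℓ * K / c⌉₊
  have hc : 0 < c := Real.sqrt_pos.2 (by positivity)
  have hn : 0 < (n : ℝ) := Nat.cast_pos.2 (Nat.ceil_pos.2 (by positivity))
  have hstep : K * (ℓ / n) ≤ c := by
    rw [mul_div_assoc', div_le_iff₀ hn, mul_comm K, ← div_le_iff₀' hc]
    exact Nat.le_ceil _
  have key := of_uniform (f := f) (f' := f') (f'' := f'') (u := u) (M := K ^ 2) (ε := ε) n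
    (div_pos hℓ hn).le
  rw [mul_div_cancel₀ ℓ hn.ne'] at key
  refine key hf' hf'' (fun x hx ↦ ?_) ?_
  · rw [← Real.sq_sqrt (abs_nonneg (f'' x))]
    exact pow_le_pow_left₀ (Real.sqrt_nonneg _) (hbound x hx) 2
  · rw [← mul_pow, ← Real.sq_sqrt (by positivity : (0 : ℝ) ≤ 2 * ε)]
    exact pow_le_pow_left₀ (by positivity) hstep 2

end PiecewiseAffineApprox

theorem Icc_uniform_cell_subset {a b : ℝ} (hab : a ≤ b) {N j : ℕ} (hj : j < N) :
    Icc (a + j * ((b - a) / N)) (a + (j + 1 : ℕ) * ((b - a) / N)) ⊆ Icc a b := by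
  have hℓ : 0 ≤ (b - a) / N := div_nonneg (sub_nonneg.2 hab) N.cast_nonneg
  have hN : ((j + 1 : ℕ) : ℝ) ≤ N := by exact_mod_cast hj
  have hN0 : (N : ℝ) ≠ 0 := Nat.cast_ne_zero.2 (by omega)
  apply Icc_subset_Icc
  · nlinarith [(j.cast_nonneg : (0 : ℝ) ≤ j)]
  · calc a + ((j + 1 : ℕ) : ℝ) * ((b - a) / N) ≤ a + N * ((b - a) / N) := by gcongr
      _ = b := by field_simp; ring

theorem exists_uniform_upper_sum_le {φ : ℝ → ℝ} {a b η : ℝ} (hab : a < b)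
    (hφ : ContinuousOn φ (Icc a b)) (hη : 0 < η) :
    ∃ N : ℕ, 0 < N ∧ ∃ M : ℕ → ℝ,
      (∀ j < N, ∀ t ∈ Icc (a + j * ((b - a) / N)) (a + (j + 1 : ℕ) * ((b - a) / N)), φ t < M j) ∧
      (b - a) / N * ∑ j ∈ Finset.range N, M j ≤ (∫ t in a..b, φ t) + η := by
  have hba : 0 < b - a := sub_pos.2 hab
  set η' := η / (2 * (b - a)) with hη'
  obtain ⟨δ, hδ, hφδ⟩ := Metric.uniformContinuousOn_iff.1
    (isCompact_Icc.uniformContinuousOn_of_continuous hφ) η' (by positivity)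
  obtain ⟨N, hN⟩ := exists_nat_gt ((b - a) / δ)
  have hN0 : (0 : ℝ) < N := lt_trans (by positivity) hN
  set ℓ := (b - a) / N with hℓ
  set p : ℕ → ℝ := fun j ↦ a + j * ℓ with hp
  have hℓδ : ℓ < δ := by rwa [div_lt_iff₀ hN0, mul_comm, ← div_lt_iff₀ hδ]
  have hp0 : p 0 = a := by simp [hp]
  have hpN : p N = b := by simp only [hp, hℓ]; field_simp; ring
  have hcell : ∀ j < N, Icc (p j) (p (j + 1)) ⊆ Icc a b :=
    fun _ hj ↦ Icc_uniform_cell_subset hab.le hj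
  have hclose : ∀ j < N, ∀ t ∈ Icc (p j) (p (j + 1)), |φ t - φ (p j)| < η' := by
    intro j hj t ht
    have hpj : p (j + 1) = p j + ℓ := by simp only [hp]; push_cast; ring
    refine hφδ t (hcell j hj ht) (p j) (hcell j hj (left_mem_Icc.2 (ht.1.trans ht.2))) ?_
    rw [Real.dist_eq, abs_of_nonneg (by linarith [ht.1])]
    linarith [ht.2]
  refine ⟨N, by exact_mod_cast hN0, fun j ↦ φ (p j) + η',
    fun j hj t ht ↦ by linarith [(abs_lt.1 (hclose j hj t ht)).2], ?_⟩
  have hle : ∀ j, p j ≤ p (j + 1) := fun j ↦ by simp only [hp]; push_cast; nlinarith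
  have hint : ∀ j < N, IntervalIntegrable φ MeasureTheory.volume (p j) (p (j + 1)) :=
    fun j hj ↦ (hφ.mono ((uIcc_of_le (hle j)).trans_subset (hcell j hj))).intervalIntegrable
  have hlow : ∀ j < N, ℓ * φ (p j) ≤ (∫ t in p j..p (j + 1), φ t) + ℓ * η' := by
    intro j hj
    have hlen : p (j + 1) - p j = ℓ := by simp only [hp]; push_cast; ring
    have := intervalIntegral.integral_mono_on (hle j) intervalIntegrable_const
      ((hint j hj).add intervalIntegrable_const)
      fun t ht ↦ (by linarith [(abs_lt.1 (hclose j hj t ht)).1] : φ (p j) ≤ φ t + η')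
    rwa [intervalIntegral.integral_const, intervalIntegral.integral_add (hint j hj)
      intervalIntegrable_const, intervalIntegral.integral_const, hlen, smul_eq_mul,
      smul_eq_mul] at this
  calc ℓ * ∑ j ∈ Finset.range N, (φ (p j) + η')
      = ∑ j ∈ Finset.range N, ℓ * φ (p j) + N * ℓ * η' := by
        rw [Finset.mul_sum]
        simp only [mul_add, Finset.sum_add_distrib, Finset.sum_const, Finset.card_range,
          nsmul_eq_mul]
        ring
    _ ≤ ∑ j ∈ Finset.range N, ((∫ t in p j..p (j + 1), φ t) + ℓ * η') + N * ℓ * η' := by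
        gcongr with j hj; exact hlow j (Finset.mem_range.1 hj)
    _ = (∫ t in a..b, φ t) + η := by
        rw [Finset.sum_add_distrib, intervalIntegral.sum_integral_adjacent_intervals hint, hp0, hpN]
        simp only [Finset.sum_const, Finset.card_range, nsmul_eq_mul, hℓ, hη']
        field_simp
        ring

theorem Nat.cast_sum_ceil_le {ι : Type*} {s : Finset ι} {x : ι → ℝ} (hx : ∀ i ∈ s, 0 ≤ x i) :
    ((∑ i ∈ s, ⌈x i⌉₊ : ℕ) : ℝ) ≤ ∑ i ∈ s, x i + s.card := by
  push_cast
  rw [← nsmul_one, ← Finset.sum_const, ← Finset.sum_add_distrib]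
  exact Finset.sum_le_sum fun i hi ↦ (Nat.ceil_lt_add_one (hx i hi)).le

theorem PiecewiseAffineApprox.exists_card_le_upper_sum {f f' f'' : ℝ → ℝ} {a b ε : ℝ}
    (hab : a < b) (hε : 0 < ε) (hf' : ∀ t ∈ Icc a b, HasDerivAt f (f' t) t)
    (hf'' : ∀ t ∈ Icc a b, HasDerivAt f' (f'' t) t) {N : ℕ} (hN : 0 < N) {M : ℕ → ℝ}
    (hM : ∀ j < N, ∀ t ∈ Icc (a + j * ((b - a) / N)) (a + (j + 1 : ℕ) * ((b - a) / N)),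
      √|f'' t| < M j) :
    ∃ m : ℕ, (m : ℝ) ≤ (b - a) / N * (∑ j ∈ Finset.range N, M j) / √(2 * ε) + N ∧
      PiecewiseAffineApprox f ε a b m := by
  set ℓ := (b - a) / N
  set c := √(2 * ε)
  have hℓ : 0 < ℓ := div_pos (sub_pos.2 hab) (Nat.cast_pos.2 hN)
  have hc : 0 < c := Real.sqrt_pos.2 (by positivity)
  have hMpos : ∀ j < N, 0 < M j := fun j hj ↦
    (Real.sqrt_nonneg _).trans_lt (hM j hj _ (left_mem_Icc.2 (by gcongr; simp)))
  have hcells : ∀ j < N, PiecewiseAffineApprox f ε (a + j * ℓ) (a + (j + 1 : ℕ) * ℓ)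
      ⌈ℓ * M j / c⌉₊ := by
    intro j hj
    have hcell := Icc_uniform_cell_subset hab.le hj
    have hnext : a + ((j + 1 : ℕ) : ℝ) * ℓ = a + j * ℓ + ℓ := by push_cast; ring
    rw [hnext] at hcell ⊢
    exact .of_sqrt_abs_deriv2_le hℓ (hMpos j hj) hε (fun x hx ↦ hf' x (hcell hx))
      (fun x hx ↦ hf'' x (hcell hx)) fun x hx ↦ (hM j hj x (hnext ▸ hx)).le
  have hpN : a + (N : ℝ) * ℓ = b := by
    rw [mul_div_cancel₀ _ (Nat.cast_ne_zero.2 hN.ne')]; ring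
  have happrox := PiecewiseAffineApprox.sum (p := fun j : ℕ ↦ a + j * ℓ) hε.le N hcells
  simp only [Nat.cast_zero, zero_mul, add_zero, hpN] at happrox
  refine ⟨_, ?_, happrox⟩
  calc ((∑ j ∈ Finset.range N, ⌈ℓ * M j / c⌉₊ : ℕ) : ℝ)
      ≤ ∑ j ∈ Finset.range N, ℓ * M j / c + N := by
        simpa using Nat.cast_sum_ceil_le (s := Finset.range N) fun j hj ↦
          (div_pos (mul_pos hℓ (hMpos j (Finset.mem_range.1 hj))) hc).le
    _ = ℓ * (∑ j ∈ Finset.range N, M j) / c + N := by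
        rw [← Finset.sum_div, ← Finset.mul_sum]

/-- For `ε` small enough, a `C²` function on `[a,b]` can be approximated within `ε`
in sup norm by a continuous piecewise affine function with at most
`(1+μ)·(∫_a^b √|f''|)/√(2ε)` pieces. -/
theorem stmt10 (a b : ℝ) (hab : a < b) (f f' f'' : ℝ → ℝ)
    (hf' : ∀ t ∈ Icc a b, HasDerivAt f (f' t) t)
    (hf'' : ∀ t ∈ Icc a b, HasDerivAt f' (f'' t) t)
    (hcont : ContinuousOn f'' (Icc a b))
    (hpos : 0 < ∫ t in a..b, Real.sqrt |f'' t|)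
    (μ : ℝ) (hμ : 0 < μ) :
    ∃ ε₀ : ℝ, 0 < ε₀ ∧ ∀ ε : ℝ, 0 < ε → ε ≤ ε₀ →
      ∃ (m : ℕ) (x : ℕ → ℝ) (g : ℝ → ℝ),
        (m : ℝ) ≤ (1 + μ) * (∫ t in a..b, Real.sqrt |f'' t|) / Real.sqrt (2 * ε) ∧
        x 0 = a ∧ x m = b ∧ (∀ k < m, x k ≤ x (k + 1)) ∧
        ContinuousOn g (Icc a b) ∧
        (∀ k < m, ∃ A B : ℝ, ∀ t ∈ Icc (x k) (x (k + 1)), g t = A * t + B) ∧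
        ∀ t ∈ Icc a b, |f t - g t| ≤ ε := by
  set I := ∫ t in a..b, √|f'' t|
  obtain ⟨N, hN, M, hM, hsum⟩ :=
    exists_uniform_upper_sum_le hab hcont.abs.sqrt (half_pos (mul_pos hμ hpos))
  refine ⟨(μ * I / (2 * N)) ^ 2 / 2, by positivity, fun ε hε hε₀ ↦ ?_⟩
  obtain ⟨m, hm, x, g, hx, hx0, hxm, hg, haff, herr, -⟩ :=
    PiecewiseAffineApprox.exists_card_le_upper_sum hab hε hf' hf'' hN hM
  have hc : 0 < √(2 * ε) := Real.sqrt_pos.2 (by positivity)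
  have hNc : (N : ℝ) ≤ μ * I / 2 / √(2 * ε) := by
    rw [le_div_iff₀ hc, ← le_div_iff₀' (by positivity), div_div,
      ← Real.sqrt_sq (by positivity : 0 ≤ μ * I / (2 * N))]
    exact Real.sqrt_le_sqrt (by linarith)
  refine ⟨m, x, g, ?_, hx0, hxm, fun k _ ↦ hx k.le_succ, hg, haff, herr⟩
  calc (m : ℝ) ≤ (b - a) / N * (∑ j ∈ Finset.range N, M j) / √(2 * ε) + N := hm
    _ ≤ (I + μ * I / 2) / √(2 * ε) + μ * I / 2 / √(2 * ε) := by gcongr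
    _ = (1 + μ) * I / √(2 * ε) := by ring
end

section
/- For integers n ≥ 1 and d ≥ 1, the number of multi-indices (l, i) with l ∈ ℕ^d, l ≥ 1, |l|₁ ≤ n+d-1, 1 ≤ i ≤ 2^l - 1 componentwise, and all components of i odd, equals Σ_{i=0}^{n-1} 2^i · C(d-1+i, d-1). Moreover this quantity equals (-1)^d + 2^n · Σ_{i=0}^{d-1} C(n+d-1, i) · (-2)^{d-1-i}. -/
/-!
A level `l ≥ 1` carries `∏ⱼ 2^(lⱼ - 1) = 2^(|l|₁ - d)` odd index vectors. Writing `l = m + 1`,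
the levels are the tuples `m` with `|m|₁ = s < n`, and there are `multichoose d s = C(d-1+s, d-1)`
of them for each `s`.

For the closed form put `G(M) = ∑_{i ≤ d-1} C(M, i) (-2)^(d-1-i)`. Pascal's rule gives
`2 G(M+1) = G(M) + C(M, d-1)`, so the right-hand side grows by `2^n C(n+d-1, d-1)` from `n` to
`n + 1`, like the sum; at `n = 0` both sides vanish since `G(d-1) = (1 - 2)^(d-1)`.
-/

open Finset

lemma card_filter_odd_range_two_mul (m : ℕ) : #{i ∈ range (2 * m) | Odd i} = m := by
  have : {i ∈ range (2 * m) | Odd i} = (range m).image (fun t => 2 * t + 1) := by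
    ext i
    simp only [mem_filter, mem_range, mem_image]
    constructor
    · rintro ⟨hi, t, rfl⟩
      exact ⟨t, by omega, rfl⟩
    · rintro ⟨t, ht, rfl⟩
      exact ⟨by omega, t, rfl⟩
  rw [this, card_image_of_injective _ fun a b h => by omega, card_range]

lemma card_antidiagonalTuple (k n : ℕ) : #(Nat.antidiagonalTuple k n) = k.multichoose n := by
  rw [card_eq_of_equiv_fintype ((Equiv.subtypeEquivRight fun _ => Nat.mem_antidiagonalTuple).trans
    (Sym.equivNatSumOfFintype (Fin k) n).symm), Sym.card_sym_eq_multichoose, Fintype.card_fin]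

lemma ncard_setOf_fst_mem_snd_mem {α β : Type*} (s : Finset α) (t : α → Finset β) :
    {p : α × β | p.1 ∈ s ∧ p.2 ∈ t p.1}.ncard = ∑ a ∈ s, #(t a) := by
  have : {p : α × β | p.1 ∈ s ∧ p.2 ∈ t p.1} =
      ↑((s.sigma t).map (Equiv.sigmaEquivProd α β).toEmbedding) := by
    ext ⟨a, b⟩
    simp
  rw [this, Set.ncard_coe_finset, card_map, card_sigma]

section OddIndices

variable {ι : Type*} [Fintype ι] [DecidableEq ι]

def oddIndices (l : ι → ℕ) : Finset (ι → ℕ) :=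
  Fintype.piFinset fun j => {i ∈ range (2 ^ l j) | Odd i}

lemma mem_oddIndices {l i : ι → ℕ} :
    i ∈ oddIndices l ↔ ∀ j, 1 ≤ i j ∧ i j ≤ 2 ^ l j - 1 ∧ Odd (i j) := by
  simp only [oddIndices, Fintype.mem_piFinset, mem_filter, mem_range]
  refine forall_congr' fun j => ⟨fun ⟨hlt, hodd⟩ => ⟨?_, by omega, hodd⟩,
    fun ⟨_, hle, hodd⟩ => ⟨?_, hodd⟩⟩
  · obtain ⟨k, hk⟩ := hodd
    omega
  · have := Nat.one_le_two_pow (n := l j)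
    omega

lemma card_oddIndices_add_one (m : ι → ℕ) : #(oddIndices (m + 1)) = 2 ^ ∑ j, m j := by
  simp only [oddIndices, Fintype.card_piFinset, Pi.add_apply, Pi.one_apply, pow_succ',
    card_filter_odd_range_two_mul, prod_pow_eq_pow_sum]

end OddIndices

/-- The levels `l ≥ 1` with `|l|₁ ≤ n + d - 1`, written as the shifts `m + 1` of the
tuples `m` with `|m|₁ < n`. -/
def sparseGridLevels (d n : ℕ) : Finset (Fin d → ℕ) :=
  ((range n).biUnion (Nat.antidiagonalTuple d)).map (addRightEmbedding 1)

lemma sum_apply_add_one {d : ℕ} (m : Fin d → ℕ) : ∑ j, (m + 1) j = ∑ j, m j + d := by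
  simp [sum_add_distrib]

lemma mem_sparseGridLevels {d n : ℕ} (hd : 0 < d) {l : Fin d → ℕ} :
    l ∈ sparseGridLevels d n ↔ (∀ j, 1 ≤ l j) ∧ ∑ j, l j ≤ n + d - 1 := by
  simp only [sparseGridLevels, mem_map, mem_biUnion, mem_range, Nat.mem_antidiagonalTuple,
    addRightEmbedding_apply]
  constructor
  · rintro ⟨m, ⟨s, hs, rfl⟩, rfl⟩
    refine ⟨fun j => by simp, ?_⟩
    rw [sum_apply_add_one]
    omega
  · rintro ⟨hl1, hsum⟩
    have hl : l - 1 + 1 = l := funext fun j => Nat.sub_add_cancel (hl1 j)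
    refine ⟨l - 1, ⟨_, ?_, rfl⟩, hl⟩
    have := sum_apply_add_one (l - 1)
    rw [hl] at this
    omega

lemma sum_card_oddIndices_sparseGridLevels (d n : ℕ) :
    ∑ l ∈ sparseGridLevels d n, #(oddIndices l) = ∑ s ∈ range n, 2 ^ s * d.multichoose s := by
  have hdisj : (range n : Set ℕ).PairwiseDisjoint (Nat.antidiagonalTuple d) :=
    fun s _ t _ hst => disjoint_left.2 fun m hs ht =>
      hst ((Nat.mem_antidiagonalTuple.1 hs).symm.trans (Nat.mem_antidiagonalTuple.1 ht))
  rw [sparseGridLevels, sum_map, sum_biUnion hdisj]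
  refine sum_congr rfl fun s _ => ?_
  rw [sum_congr rfl fun m hm => by
      rw [addRightEmbedding_apply, card_oddIndices_add_one, Nat.mem_antidiagonalTuple.1 hm],
    sum_const, card_antidiagonalTuple, smul_eq_mul, mul_comm]

section TruncatedBinomialSum

variable {R : Type*} [CommRing R] (x : R)

def truncBinomialSum (M e : ℕ) : R :=
  ∑ i ∈ range (e + 1), (M.choose i : R) * x ^ (e - i)

lemma truncBinomialSum_self (e : ℕ) : truncBinomialSum x e e = (1 + x) ^ e := by
  rw [truncBinomialSum, add_pow]
  exact sum_congr rfl fun i _ => by rw [one_pow, one_mul, mul_comm]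

lemma truncBinomialSum_zero (M : ℕ) : truncBinomialSum x M 0 = 1 := by
  simp [truncBinomialSum]

lemma truncBinomialSum_succ (M e : ℕ) :
    truncBinomialSum x M (e + 1) = x * truncBinomialSum x M e + M.choose (e + 1) := by
  rw [truncBinomialSum, sum_range_succ, Nat.sub_self, pow_zero, mul_one, truncBinomialSum, mul_sum]
  congr 1
  refine sum_congr rfl fun i hi => ?_
  rw [Nat.sub_add_comm (mem_range_succ_iff.1 hi), pow_succ]
  ring

lemma truncBinomialSum_succ_succ (M e : ℕ) :
    truncBinomialSum x (M + 1) (e + 1) = truncBinomialSum x M (e + 1) + truncBinomialSum x M e := by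
  simp only [truncBinomialSum]
  rw [sum_range_succ' _ (e + 1), sum_range_succ' _ (e + 1)]
  simp only [Nat.choose_succ_succ, Nat.cast_add, add_mul, sum_add_distrib, Nat.choose_zero_right,
    Nat.add_sub_add_right]
  ring

lemma mul_truncBinomialSum_succ_left (M e : ℕ) :
    x * truncBinomialSum x (M + 1) e = (x + 1) * truncBinomialSum x M e - M.choose e := by
  cases e with
  | zero => simp [truncBinomialSum_zero]
  | succ e =>
    rw [truncBinomialSum_succ_succ, truncBinomialSum_succ x M e]
    ring

end TruncatedBinomialSum

lemma sum_range_two_pow_mul_choose (n e : ℕ) :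
    (∑ i ∈ range n, 2 ^ i * (e + i).choose e : ℤ) =
      (-1) ^ (e + 1) + 2 ^ n * truncBinomialSum (-2) (n + e) e := by
  induction n with
  | zero =>
    rw [zero_add, truncBinomialSum_self, pow_succ]
    norm_num
  | succ n ih =>
    have key := mul_truncBinomialSum_succ_left (-2 : ℤ) (n + e) e
    rw [sum_range_succ, ih, Nat.add_right_comm, pow_succ, add_comm e n]
    linear_combination (2 ^ n : ℤ) * key

theorem stmt11_general (n d : ℕ) (hd : 1 ≤ d) :
    ({p : (Fin d → ℕ) × (Fin d → ℕ) |
        (∀ j, 1 ≤ p.1 j) ∧ (∑ j, p.1 j) ≤ n + d - 1 ∧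
        ∀ j, 1 ≤ p.2 j ∧ p.2 j ≤ 2 ^ (p.1 j) - 1 ∧ Odd (p.2 j)}.ncard
      = ∑ i ∈ Finset.range n, 2 ^ i * (d - 1 + i).choose (d - 1)) ∧
    ((∑ i ∈ Finset.range n, 2 ^ i * (d - 1 + i).choose (d - 1) : ℤ)
      = (-1) ^ d + 2 ^ n * ∑ i ∈ Finset.range d,
          ((n + d - 1).choose i : ℤ) * (-2) ^ (d - 1 - i)) := by
  constructor
  · have hset : {p : (Fin d → ℕ) × (Fin d → ℕ) |
        (∀ j, 1 ≤ p.1 j) ∧ (∑ j, p.1 j) ≤ n + d - 1 ∧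
        ∀ j, 1 ≤ p.2 j ∧ p.2 j ≤ 2 ^ (p.1 j) - 1 ∧ Odd (p.2 j)} =
        {p | p.1 ∈ sparseGridLevels d n ∧ p.2 ∈ oddIndices p.1} := by
      ext p
      simp only [Set.mem_ofPred_eq, mem_sparseGridLevels hd, mem_oddIndices, and_assoc]
    rw [hset, ncard_setOf_fst_mem_snd_mem, sum_card_oddIndices_sparseGridLevels]
    refine sum_congr rfl fun s _ => ?_
    rw [Nat.multichoose_eq, show d + s - 1 = d - 1 + s by omega, Nat.choose_symm_add]
  · obtain ⟨e, rfl⟩ := Nat.exists_eq_add_of_le' hd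
    simpa [truncBinomialSum] using sum_range_two_pow_mul_choose n e

/-- The number of sparse-grid multi-indices `(l, i)` with `l ≥ 1`, `|l|₁ ≤ n+d-1`,
`1 ≤ i ≤ 2^l - 1` componentwise with all components of `i` odd, equals
`∑_{i=0}^{n-1} 2^i·C(d-1+i, d-1)`, which in turn equals
`(-1)^d + 2^n·∑_{i=0}^{d-1} C(n+d-1, i)·(-2)^{d-1-i}`. -/
theorem stmt11 (n d : ℕ) (hn : 1 ≤ n) (hd : 1 ≤ d) :
    ({p : (Fin d → ℕ) × (Fin d → ℕ) |
        (∀ j, 1 ≤ p.1 j) ∧ (∑ j, p.1 j) ≤ n + d - 1 ∧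
        ∀ j, 1 ≤ p.2 j ∧ p.2 j ≤ 2 ^ (p.1 j) - 1 ∧ Odd (p.2 j)}.ncard
      = ∑ i ∈ Finset.range n, 2 ^ i * (d - 1 + i).choose (d - 1)) ∧
    ((∑ i ∈ Finset.range n, 2 ^ i * (d - 1 + i).choose (d - 1) : ℤ)
      = (-1) ^ d + 2 ^ n * ∑ i ∈ Finset.range d,
          ((n + d - 1).choose i : ℤ) * (-2) ^ (d - 1 - i)) :=
  stmt11_general n d hd
end

section
/- Let n_ε be defined, for a fixed constant C > 0 and dimension d ≥ 1, as the smallest positive integer n such that C·2^{-2n}·A(d,n) ≤ ε/2, where A(d,n) = Σ_{k=0}^{d-1} C(n+d-1, k). Then as ε → 0: n_ε ~ (1/(2 log 2))·log(1/ε), and 2^{n_ε} = O(ε^{-1/2}·(log(1/ε))^{(d-1)/2}). -/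
/-!
Write `N = n_ε` and `L = log (1/ε)`. Minimality of `N` traps `ε · 4^N` between `2C·A(N)` and
`4 · 2C·A(N-1)`, so `(N-1) log 4 - log (2C·A(N-1)) < L ≤ N log 4 - log (2C)`. As `A(m)` grows
only polynomially, `log A(m) = o(m)`; hence `N → ∞` and `L / N → log 4 = 2 log 2`. In
particular `N ≤ L` for small `ε`, and then `4^N < 8C·A(N-1)/ε ≤ 8C d^d L^(d-1)/ε`; take square
roots.
-/

open Set Filter Topology Real

namespace SparseGridLevel

noncomputable def binomPartialSum (d n : ℕ) : ℝ :=
  ∑ k ∈ Finset.range d, ((n + d - 1).choose k : ℝ)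

/-- The truncation level `n_ε` for a general count `A` in place of `A(d, ·)`. -/
noncomputable def level (A : ℕ → ℝ) (C ε : ℝ) : ℕ :=
  sInf {n : ℕ | 1 ≤ n ∧ C * (2 : ℝ) ^ (-(2 * (n : ℤ))) * A n ≤ ε / 2}

section General

variable {A : ℕ → ℝ} {B C ε : ℝ} {p : ℕ}

lemma two_zpow_neg_two_mul (n : ℕ) : (2 : ℝ) ^ (-(2 * (n : ℤ))) = ((4 : ℝ) ^ n)⁻¹ := by
  rw [zpow_neg, show (2 * (n : ℤ)) = ((2 * n : ℕ) : ℤ) by push_cast; ring, zpow_natCast,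
    pow_mul]
  norm_num

lemma level_condition_iff (n : ℕ) :
    C * (2 : ℝ) ^ (-(2 * (n : ℤ))) * A n ≤ ε / 2 ↔ 2 * C * A n ≤ ε * 4 ^ n := by
  rw [two_zpow_neg_two_mul, show C * ((4 : ℝ) ^ n)⁻¹ * A n = 2 * C * A n / 4 ^ n / 2 by ring,
    div_le_div_iff_of_pos_right two_pos, div_le_iff₀ (by positivity)]

lemma tendsto_div_four_pow (hA : ∀ n, 1 ≤ A n) (hB : ∀ n, A n ≤ B * ((n : ℝ) + 1) ^ p) :
    Tendsto (fun n => A n / 4 ^ n) atTop (𝓝 0) := by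
  have hpoly : Tendsto (fun n : ℕ => 4 * B * (((n + 1 : ℕ) : ℝ) ^ p / 4 ^ (n + 1)))
      atTop (𝓝 0) := by
    simpa using ((tendsto_pow_const_div_const_pow_of_one_lt p (by norm_num : (1 : ℝ) < 4)).comp
      (tendsto_add_atTop_nat 1)).const_mul (4 * B)
  refine squeeze_zero (fun n => div_nonneg (zero_le_one.trans (hA n)) (by positivity))
    (fun n => ?_) hpoly
  rw [pow_succ, Nat.cast_succ, show 4 * B * (((n : ℝ) + 1) ^ p / (4 ^ n * 4))
    = B * ((n : ℝ) + 1) ^ p / 4 ^ n by field_simp]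
  exact div_le_div_of_nonneg_right (hB n) (by positivity)

lemma level_spec (hA : ∀ n, 1 ≤ A n) (hB : ∀ n, A n ≤ B * ((n : ℝ) + 1) ^ p)
    (hε : 0 < ε) :
    1 ≤ level A C ε ∧ 2 * C * A (level A C ε) ≤ ε * 4 ^ level A C ε := by
  have hsmall : ∀ᶠ n in atTop, 2 * C * (A n / 4 ^ n) < ε := by
    simpa using ((tendsto_div_four_pow hA hB).const_mul (2 * C)).eventually
      (gt_mem_nhds (by simpa using hε))
  obtain ⟨n, hn, hn1⟩ := (hsmall.and (eventually_ge_atTop 1)).exists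
  have hmem :
      level A C ε ∈ {n : ℕ | 1 ≤ n ∧ C * (2 : ℝ) ^ (-(2 * (n : ℤ))) * A n ≤ ε / 2} :=
    Nat.sInf_mem ⟨n, hn1, (level_condition_iff n).2 <| by
      rw [mul_div_assoc', div_lt_iff₀ (by positivity)] at hn; exact hn.le⟩
  exact ⟨hmem.1, (level_condition_iff _).1 hmem.2⟩

lemma lt_of_two_le_level (h : 2 ≤ level A C ε) :
    ε * 4 ^ (level A C ε - 1) < 2 * C * A (level A C ε - 1) := by
  by_contra! hle
  exact Nat.notMem_of_lt_sInf (by omega : level A C ε - 1 < level A C ε)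
    ⟨by omega, (level_condition_iff _).2 hle⟩

lemma log_one_div_le_level_mul (hC : 0 < C) (hA : ∀ n, 1 ≤ A n)
    (hB : ∀ n, A n ≤ B * ((n : ℝ) + 1) ^ p) (hε : 0 < ε) :
    log (1 / ε) ≤ level A C ε * log 4 - log (2 * C) := by
  have hle : 2 * C ≤ ε * 4 ^ level A C ε :=
    le_trans (le_mul_of_one_le_right (by positivity) (hA _)) (level_spec hA hB hε).2
  have hlog := log_le_log (by positivity) hle
  rw [log_mul hε.ne' (by positivity), log_pow] at hlog
  rw [one_div, log_inv]
  linarith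

lemma level_pred_mul_lt_log_one_div (hε : 0 < ε) (h : 2 ≤ level A C ε) :
    ((level A C ε - 1 : ℕ) : ℝ) * log 4 - log (2 * C * A (level A C ε - 1)) <
      log (1 / ε) := by
  have hlog := log_lt_log (by positivity) (lt_of_two_le_level h)
  rw [log_mul hε.ne' (by positivity), log_pow] at hlog
  rw [one_div, log_inv]
  linarith

lemma tendsto_log_one_div : Tendsto (fun ε : ℝ => log (1 / ε)) (𝓝[>] 0) atTop := by
  simp only [one_div]
  exact tendsto_log_atTop.comp tendsto_inv_nhdsGT_zero

lemma tendsto_level (hC : 0 < C) (hA : ∀ n, 1 ≤ A n)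
    (hB : ∀ n, A n ≤ B * ((n : ℝ) + 1) ^ p) :
    Tendsto (level A C) (𝓝[>] 0) atTop := by
  rw [← tendsto_natCast_atTop_iff (R := ℝ)]
  have hlog4 : 0 < log 4 := log_pos (by norm_num)
  refine tendsto_atTop_mono' _ ?_
    ((tendsto_log_one_div.atTop_add (tendsto_const_nhds (x := log (2 * C)))).atTop_div_const hlog4)
  filter_upwards [self_mem_nhdsWithin] with ε hε
  rw [div_le_iff₀ hlog4]
  linarith [log_one_div_le_level_mul hC hA hB hε]

lemma tendsto_log_div_add_one (hA : ∀ n, 1 ≤ A n)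
    (hB : ∀ n, A n ≤ B * ((n : ℝ) + 1) ^ p) :
    Tendsto (fun n : ℕ => log (A n) / (n + 1)) atTop (𝓝 0) := by
  have hB0 : 0 < B := zero_lt_one.trans_le (by simpa using (hA 0).trans (hB 0))
  have hlin : Tendsto (fun n : ℕ => (n : ℝ) + 1) atTop atTop :=
    tendsto_atTop_add_const_right _ _ tendsto_natCast_atTop_atTop
  have hupper : Tendsto
      (fun n : ℕ => log B / ((n : ℝ) + 1) + p * (log ((n : ℝ) + 1) / (n + 1)))
      atTop (𝓝 0) := by
    simpa using (tendsto_const_nhds.div_atTop hlin).add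
      ((isLittleO_log_id_atTop.tendsto_div_nhds_zero.comp hlin).const_mul (p : ℝ))
  refine squeeze_zero (fun n => div_nonneg (log_nonneg (hA n)) (by positivity)) (fun n => ?_)
    hupper
  have hlog := log_le_log (zero_lt_one.trans_le (hA n)) (hB n)
  rw [log_mul hB0.ne' (by positivity), log_pow] at hlog
  rw [mul_div_assoc', ← add_div]
  exact div_le_div_of_nonneg_right hlog (by positivity)

lemma tendsto_log_one_div_div_level (hC : 0 < C) (hA : ∀ n, 1 ≤ A n)
    (hB : ∀ n, A n ≤ B * ((n : ℝ) + 1) ^ p) :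
    Tendsto (fun ε => log (1 / ε) / level A C ε) (𝓝[>] 0) (𝓝 (log 4)) := by
  have hN := tendsto_level hC hA hB
  have hlin : Tendsto (fun n : ℕ => (n : ℝ) + 1) atTop atTop :=
    tendsto_atTop_add_const_right _ _ tendsto_natCast_atTop_atTop
  have hlower : Tendsto (fun m : ℕ => log 4 * (m / (m + 1)) -
      (log (2 * C) / (m + 1) + log (A m) / (m + 1))) atTop (𝓝 (log 4)) := by
    simpa using ((tendsto_natCast_div_add_atTop (1 : ℝ)).const_mul (log 4)).sub
      ((tendsto_const_nhds.div_atTop hlin).add (tendsto_log_div_add_one hA hB))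
  have hupper : Tendsto (fun n : ℕ => log 4 - log (2 * C) / n) atTop (𝓝 (log 4)) := by
    simpa using tendsto_const_nhds.sub (tendsto_const_div_atTop_nhds_zero_nat (log (2 * C)))
  refine tendsto_of_tendsto_of_tendsto_of_le_of_le'
    ((hlower.comp (tendsto_sub_atTop_nat 1)).comp hN) (hupper.comp hN) ?_ ?_
  · filter_upwards [self_mem_nhdsWithin, hN.eventually_ge_atTop 2] with ε hε h2
    have hlt := level_pred_mul_lt_log_one_div hε h2
    set m := level A C ε - 1
    have hcast : (level A C ε : ℝ) = m + 1 := by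
      rw [← Nat.cast_add_one, Nat.sub_add_cancel (by omega)]
    rw [log_mul (by positivity) (zero_lt_one.trans_le (hA m)).ne'] at hlt
    simp only [Function.comp_apply, hcast]
    rw [show log 4 * (m / (m + 1)) - (log (2 * C) / (m + 1) + log (A m) / (m + 1))
      = (m * log 4 - (log (2 * C) + log (A m))) / (m + 1) by ring]
    exact div_le_div_of_nonneg_right hlt.le (by positivity)
  · filter_upwards [self_mem_nhdsWithin] with ε hε
    have hN1 : (0 : ℝ) < level A C ε := by exact_mod_cast (level_spec hA hB hε).1
    simp only [Function.comp_apply]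
    rw [div_le_iff₀ hN1, sub_mul, div_mul_cancel₀ _ hN1.ne']
    linarith [log_one_div_le_level_mul hC hA hB hε]

lemma tendsto_level_div (hC : 0 < C) (hA : ∀ n, 1 ≤ A n)
    (hB : ∀ n, A n ≤ B * ((n : ℝ) + 1) ^ p) :
    Tendsto (fun ε => (level A C ε : ℝ) / ((1 / (2 * log 2)) * log (1 / ε))) (𝓝[>] 0)
      (𝓝 1) := by
  have hlog4 : log 4 = 2 * log 2 := by
    rw [show (4 : ℝ) = 2 ^ 2 by norm_num, log_pow]; norm_cast
  have h := ((tendsto_log_one_div_div_level hC hA hB).inv₀ (by positivity)).const_mul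
    (2 * log 2)
  rw [hlog4, mul_inv_cancel₀ (by positivity)] at h
  refine h.congr fun ε => ?_
  simp only [div_eq_mul_inv, mul_inv, inv_inv]
  ring

lemma two_pow_le_of_four_pow_le {n : ℕ} {K x y : ℝ} (hK : 0 ≤ K) (hx : 0 < x) (hy : 0 ≤ y)
    (h : (4 : ℝ) ^ n ≤ K * y ^ p / x) :
    (2 : ℝ) ^ n ≤ √K * x ^ (-(1 : ℝ) / 2) * y ^ ((p : ℝ) / 2) := by
  calc (2 : ℝ) ^ n = √((4 : ℝ) ^ n) := by
        rw [show (4 : ℝ) ^ n = (2 ^ n) ^ 2 by rw [← pow_mul, mul_comm, pow_mul]; norm_num,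
          sqrt_sq (by positivity)]
    _ ≤ √(K * y ^ p / x) := sqrt_le_sqrt h
    _ = √K * x ^ (-(1 : ℝ) / 2) * y ^ ((p : ℝ) / 2) := by
        rw [sqrt_div' _ hx.le, sqrt_mul hK, sqrt_eq_rpow, sqrt_eq_rpow, sqrt_eq_rpow,
          ← rpow_natCast, ← rpow_mul hy, neg_div, rpow_neg hx.le]
        ring_nf

lemma eventually_two_pow_level_le (hC : 0 < C) (hA : ∀ n, 1 ≤ A n)
    (hB : ∀ n, A n ≤ B * ((n : ℝ) + 1) ^ p) :
    ∀ᶠ ε in 𝓝[>] 0,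
      (2 : ℝ) ^ level A C ε ≤
        √(8 * C * B) * ε ^ (-(1 : ℝ) / 2) * log (1 / ε) ^ ((p : ℝ) / 2) := by
  have hB0 : 0 ≤ B := zero_le_one.trans (by simpa using (hA 0).trans (hB 0))
  have hratio : ∀ᶠ ε in 𝓝[>] 0, 1 < log (1 / ε) / level A C ε :=
    (tendsto_log_one_div_div_level hC hA hB).eventually
      (lt_mem_nhds (by rw [lt_log_iff_exp_lt (by norm_num)]; linarith [exp_one_lt_d9]))
  filter_upwards [self_mem_nhdsWithin, (tendsto_level hC hA hB).eventually_ge_atTop 2, hratio]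
    with ε hε h2 hratio
  have hlt := lt_of_two_le_level h2
  set N := level A C ε
  have hN0 : (0 : ℝ) < N := by exact_mod_cast (by omega : 0 < N)
  have hNL : (N : ℝ) ≤ log (1 / ε) := by
    rw [one_lt_div hN0] at hratio; exact hratio.le
  have hcast : ((N - 1 : ℕ) : ℝ) + 1 = N := by
    rw [← Nat.cast_add_one, Nat.sub_add_cancel (by omega)]
  refine two_pow_le_of_four_pow_le (by positivity) hε (hN0.le.trans hNL) ?_
  rw [le_div_iff₀ hε]
  calc (4 : ℝ) ^ N * ε = 4 * (ε * 4 ^ (N - 1)) := by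
        conv_lhs => rw [← Nat.sub_add_cancel (show 1 ≤ N by omega), pow_succ]
        ring
    _ ≤ 4 * (2 * C * A (N - 1)) := by gcongr
    _ ≤ 4 * (2 * C * (B * N ^ p)) := by
        gcongr
        rw [← hcast]
        exact hB _
    _ ≤ 8 * C * B * log (1 / ε) ^ p := by
        rw [show 4 * (2 * C * (B * (N : ℝ) ^ p)) = 8 * C * B * N ^ p by ring]
        gcongr

end General

lemma one_le_binomPartialSum {d : ℕ} (hd : 1 ≤ d) (n : ℕ) : 1 ≤ binomPartialSum d n := by
  calc (1 : ℝ) = ((n + d - 1).choose 0 : ℝ) := by simp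
    _ ≤ binomPartialSum d n :=
      Finset.single_le_sum (f := fun k => ((n + d - 1).choose k : ℝ)) (fun _ _ => by positivity)
        (Finset.mem_range.2 hd)

lemma binomPartialSum_le (d n : ℕ) :
    binomPartialSum d n ≤ (d : ℝ) ^ d * ((n : ℝ) + 1) ^ (d - 1) := by
  have hterm : ∀ k ∈ Finset.range d, (n + d - 1).choose k ≤ (d * (n + 1)) ^ (d - 1) := by
    intro k hk
    have hk := Finset.mem_range.1 hk
    calc (n + d - 1).choose k ≤ (n + d - 1) ^ k := Nat.choose_le_pow _ _
      _ ≤ (d * (n + 1)) ^ k := Nat.pow_le_pow_left (by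
          have := Nat.le_mul_of_pos_left n (show 0 < d by omega); rw [Nat.mul_succ]; omega) _
      _ ≤ (d * (n + 1)) ^ (d - 1) := Nat.pow_le_pow_right (Nat.mul_pos (by omega) n.succ_pos)
          (by omega)
  have hsum : ∑ k ∈ Finset.range d, (n + d - 1).choose k ≤ d ^ d * (n + 1) ^ (d - 1) := by
    refine (Finset.sum_le_card_nsmul _ _ _ hterm).trans ?_
    rcases d with _ | d
    · simp
    · rw [Finset.card_range, smul_eq_mul, mul_pow, ← mul_assoc, Nat.add_sub_cancel,
        ← pow_succ']
  unfold binomPartialSum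
  exact_mod_cast hsum

end SparseGridLevel

open SparseGridLevel in
/-- With `n_ε` the smallest `n ≥ 1` such that `C·2^{-2n}·A(d,n) ≤ ε/2`, where
`A(d,n) = ∑_{k<d} C(n+d-1,k)`: as `ε → 0⁺`, `n_ε ~ (1/(2 log 2))·log(1/ε)` and
`2^{n_ε} = O(ε^{-1/2}·(log(1/ε))^{(d-1)/2})`. -/
theorem stmt18 (d : ℕ) (hd : 1 ≤ d) (C : ℝ) (hC : 0 < C) :
    let A : ℕ → ℝ := fun n => ∑ k ∈ Finset.range d, ((n + d - 1).choose k : ℝ)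
    let nε : ℝ → ℕ := fun ε =>
      sInf {n : ℕ | 1 ≤ n ∧ C * (2 : ℝ) ^ (-(2 * (n : ℤ))) * A n ≤ ε / 2}
    Tendsto (fun ε : ℝ => (nε ε : ℝ) / ((1 / (2 * Real.log 2)) * Real.log (1 / ε)))
        (nhdsWithin 0 (Ioi 0)) (nhds 1) ∧
    ∃ K ε₀ : ℝ, 0 < K ∧ 0 < ε₀ ∧ ∀ ε : ℝ, 0 < ε → ε < ε₀ →
      (2 : ℝ) ^ (nε ε) ≤ K * ε ^ (-(1 : ℝ) / 2) *
        Real.log (1 / ε) ^ (((d : ℝ) - 1) / 2) := by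
  intro A nε
  have hA : ∀ n, 1 ≤ A n := one_le_binomPartialSum hd
  have hB : ∀ n, A n ≤ (d : ℝ) ^ d * ((n : ℝ) + 1) ^ (d - 1) := binomPartialSum_le d
  refine ⟨tendsto_level_div hC hA hB, ?_⟩
  obtain ⟨ε₀, hε₀, hbound⟩ :=
    (nhdsGT_basis 0).eventually_iff.1 (eventually_two_pow_level_le hC hA hB)
  refine ⟨√(8 * C * d ^ d), ε₀, sqrt_pos.2 (by positivity), hε₀, fun ε hε hεε₀ => ?_⟩
  have h := hbound ⟨hε, hεε₀⟩
  rw [Nat.cast_sub hd, Nat.cast_one] at h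
  exact h
end
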